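/- arXiv:2007.14169 — 4 statements merged into one kernel-verified Lean document; each statement's English description precedes it below -/
import Mathlib

section
/- Let G and H be hypergraphs and suppose there exists a surjective hypergraph homomorphism f: V(G) → V(H) (surjective onto V(H), mapping edges of G onto edges of H). Then the fractional edge cover number of H is at most the fractional edge cover number of G, i.e., ρ*(H) ≤ ρ*(G). -/
open scoped ENNReal

/-- The fractional edge cover number `ρ*` of a finite hypergraph: the infimum of the total
weight over all fractional edge covers of the full vertex set. -/
noncomputable def fracCoverNum {V : Type*} [Fintype V] [DecidableEq V]
    (E : Finset (Finset V)) : ℝ≥0∞ :=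
  sInf {w : ℝ≥0∞ | ∃ γ : Finset V → ℝ≥0∞,
    (∀ v : V, 1 ≤ ∑ e ∈ E.filter (fun e => v ∈ e), γ e) ∧ w = ∑ e ∈ E, γ e}

/-- If there is a surjective hypergraph homomorphism from `G` onto `H`,
then `ρ*(H) ≤ ρ*(G)`. -/
theorem stmt_2 {VG VH : Type*} [Fintype VG] [Fintype VH] [DecidableEq VG] [DecidableEq VH]
    (EG : Finset (Finset VG)) (EH : Finset (Finset VH))
    (f : VG → VH) (hsurj : Function.Surjective f)
    (hhom : ∀ g ∈ EG, g.image f ∈ EH) :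
    fracCoverNum EH ≤ fracCoverNum EG := by
  apply sInf_le_sInf
  rintro w ⟨γ, hcov, rfl⟩
  classical
  refine ⟨fun h => ∑ g ∈ EG.filter (fun g => g.image f = h), γ g, ?_, ?_⟩
  · intro v
    obtain ⟨u, rfl⟩ := hsurj v
    calc (1 : ℝ≥0∞) ≤ ∑ g ∈ EG.filter (fun g => u ∈ g), γ g := hcov u
      _ ≤ ∑ g ∈ EG.filter (fun g => f u ∈ g.image f), γ g := by
          apply Finset.sum_le_sum_of_subset
          intro g hg
          simp only [Finset.mem_filter] at hg ⊢
          exact ⟨hg.1, Finset.mem_image_of_mem f hg.2⟩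
      _ = ∑ h ∈ EH.filter (fun h => f u ∈ h),
            ∑ g ∈ EG.filter (fun g => g.image f = h), γ g := by
          rw [← Finset.sum_fiberwise_of_maps_to
            (t := EH.filter (fun h => f u ∈ h)) (g := fun g => g.image f) (fun g hg => by
              simp only [Finset.mem_filter] at hg ⊢
              exact ⟨hhom g hg.1, hg.2⟩) γ]
          apply Finset.sum_congr rfl
          intro h hh
          simp only [Finset.mem_filter] at hh
          apply Finset.sum_congr _ (fun _ _ => rfl)
          ext g
          simp only [Finset.mem_filter]
          constructor
          · rintro ⟨⟨h1, _⟩, h3⟩; exact ⟨h1, h3⟩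
          · rintro ⟨h1, rfl⟩; exact ⟨⟨h1, hh.2⟩, rfl⟩
  · exact (Finset.sum_fiberwise_of_maps_to hhom γ).symm
end

section
/- Let H be a hypergraph with at least one edge. Then the treewidth of H satisfies tw(H) + 1 ≤ rank(H) · subw(H), where rank(H) is the maximum edge size and subw(H) is the submodular width of H. Consequently tw(H) ≤ rank(H) · subw(H). -/
/-! The function `X ↦ |X| / rank(H)` is monotone, modular and edge-dominated, so it is one of the
functions in the supremum defining `subw(H)`. Its width is the maximal bag size divided by
`rank(H)`, and the maximal bag size of any decomposition is its treewidth cost plus one. -/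

open scoped ENNReal

/-- A tree decomposition of the finite hypergraph with vertex type `V` and edge set `E`. -/
structure TreeDecomp (V : Type) [Fintype V] [DecidableEq V] (E : Finset (Finset V)) where
  τ : Type
  T : SimpleGraph τ
  tree : T.IsTree
  B : τ → Finset V
  cover : ∀ e ∈ E, ∃ u : τ, e ⊆ B u
  conn : ∀ v : V, (T.induce {u : τ | v ∈ B u}).Preconnected

/-- The `f`-width of a hypergraph: minimal (infimum) over tree decompositions of the
supremum of `f` over the bags. -/
noncomputable def fWidth (V : Type) [Fintype V] [DecidableEq V] (E : Finset (Finset V))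
    (f : Finset V → ℝ≥0∞) : ℝ≥0∞ :=
  ⨅ D : TreeDecomp V E, ⨆ u : D.τ, f (D.B u)

/-- Treewidth (as an extended real), via the width function `c(X) = |X| - 1`. -/
noncomputable def twE (V : Type) [Fintype V] [DecidableEq V] (E : Finset (Finset V)) : ℝ≥0∞ :=
  fWidth V E (fun X => (X.card : ℝ≥0∞) - 1)

/-- Submodular width: supremum of the `b`-widths over all monotone, edge-dominated,
submodular `b` with `b ∅ = 0`. -/
noncomputable def subwE (V : Type) [Fintype V] [DecidableEq V] (E : Finset (Finset V)) : ℝ≥0∞ :=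
  ⨆ b ∈ {b : Finset V → ℝ≥0∞ |
      (∀ X Y : Finset V, X ⊆ Y → b X ≤ b Y) ∧
      (∀ e ∈ E, b e ≤ 1) ∧
      (∀ X Y : Finset V, b (X ∩ Y) + b (X ∪ Y) ≤ b X + b Y) ∧
      b ∅ = 0},
    fWidth V E b

section

variable {V : Type} [Fintype V] [DecidableEq V] {E : Finset (Finset V)}

theorem fWidth_div_le (f : Finset V → ℝ≥0∞) (c : ℝ≥0∞) :
    fWidth V E f / c ≤ fWidth V E (fun X => f X / c) :=
  le_iInf fun D => by
    rw [← ENNReal.iSup_div]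
    exact ENNReal.div_le_div_right (iInf_le _ D) c

theorem fWidth_le_subwE {b : Finset V → ℝ≥0∞} (hmono : ∀ X Y : Finset V, X ⊆ Y → b X ≤ b Y)
    (hedge : ∀ e ∈ E, b e ≤ 1) (hsub : ∀ X Y : Finset V, b (X ∩ Y) + b (X ∪ Y) ≤ b X + b Y)
    (hempty : b ∅ = 0) : fWidth V E b ≤ subwE V E :=
  le_iSup₂ (f := fun b _ => fWidth V E b) b ⟨hmono, hedge, hsub, hempty⟩

theorem fWidth_card_div_le_subwE (r : ℕ) (hr : ∀ e ∈ E, e.card ≤ r) :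
    fWidth V E (fun X => (X.card : ℝ≥0∞) / r) ≤ subwE V E := by
  refine fWidth_le_subwE ?_ ?_ ?_ (by simp)
  · intro X Y hXY
    exact ENNReal.div_le_div_right (by exact_mod_cast Finset.card_le_card hXY) _
  · intro e he
    exact ENNReal.div_le_of_le_mul (by simpa using hr e he)
  · intro X Y
    simp only [ENNReal.div_add_div_same]
    exact ENNReal.div_le_div_right (by exact_mod_cast (Finset.card_inter_add_card_union X Y).le) _

theorem twE_add_one_le_fWidth_card {e : Finset V} (he : e ∈ E) (hne : e.Nonempty) :
    twE V E + 1 ≤ fWidth V E (fun X => (X.card : ℝ≥0∞)) := by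
  refine le_iInf fun D => ?_
  set S := ⨆ u : D.τ, ((D.B u).card : ℝ≥0∞)
  have hS : 1 ≤ S := by
    obtain ⟨u, hu⟩ := D.cover e he
    have : 1 ≤ (D.B u).card := Finset.card_pos.2 (hne.mono hu)
    exact le_iSup_of_le u (by exact_mod_cast this)
  have htw : twE V E ≤ S - 1 :=
    (iInf_le _ D).trans <| iSup_le fun u =>
      tsub_le_tsub_right (le_iSup (fun u => ((D.B u).card : ℝ≥0∞)) u) 1
  calc twE V E + 1 ≤ S - 1 + 1 := add_le_add_left htw 1
    _ = S := tsub_add_cancel_of_le hS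

end

/-- For a hypergraph `H` with at least one edge (edges being nonempty),
`tw(H) + 1 ≤ rank(H) · subw(H)`, and consequently `tw(H) ≤ rank(H) · subw(H)`. -/
theorem stmt_7 (V : Type) [Fintype V] [DecidableEq V] (E : Finset (Finset V))
    (hEne : E.Nonempty) (hne : ∀ e ∈ E, e.Nonempty)
    (rank : ℕ) (hrank : rank = (E.image Finset.card).max' (hEne.image _)) :
    twE V E + 1 ≤ (rank : ℝ≥0∞) * subwE V E ∧
    twE V E ≤ (rank : ℝ≥0∞) * subwE V E := by
  obtain ⟨e₀, he₀⟩ := hEne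
  have hcard : ∀ e ∈ E, e.card ≤ rank := fun e he =>
    hrank ▸ Finset.le_max' _ _ (Finset.mem_image_of_mem _ he)
  have hrank_ne_zero : (rank : ℝ≥0∞) ≠ 0 := by
    exact_mod_cast (Finset.card_pos.2 (hne e₀ he₀)).trans_le (hcard e₀ he₀) |>.ne'
  have main : twE V E + 1 ≤ rank * subwE V E := by
    rw [mul_comm, ← ENNReal.div_le_iff hrank_ne_zero (ENNReal.natCast_ne_top rank)]
    calc (twE V E + 1) / rank ≤ fWidth V E (fun X => (X.card : ℝ≥0∞)) / rank :=
          ENNReal.div_le_div_right (twE_add_one_le_fWidth_card he₀ (hne e₀ he₀)) _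
      _ ≤ fWidth V E (fun X => (X.card : ℝ≥0∞) / rank) := fWidth_div_le _ _
      _ ≤ subwE V E := fWidth_card_div_le_subwE rank hcard
  exact ⟨main, le_self_add.trans main⟩
end

section
/- Let U = ⋃_{i=1}^n A_i and U' = ⋃_{j=1}^m A'_j be non-redundant UCQs (finite sets of structures with no distinct pair where one is contained in the other). Then U and U' are semantically equivalent if and only if there is a bijection between the constituent structures pairing each A_i with a homomorphically equivalent A'_j. -/
open FirstOrder

universe u v w

/-- Sagiv–Yannakakis: Let `U = (A i)_{i : ι}` and `U' = (B j)_{j : κ}` be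
non-redundant UCQs of finite relational structures (no distinct constituents where one is
contained in the other; `A` is contained in `A'` iff there is a homomorphism `A' → A`).
Then `U` and `U'` are semantically equivalent iff there is a bijection `ι ≃ κ` pairing each
`A i` with a homomorphically equivalent `B (e i)`. -/
theorem stmt_14 {L : FirstOrder.Language.{u, v}} [L.IsRelational] [Finite L.Symbols]
    {ι κ : Type*} [Fintype ι] [Fintype κ]
    (A : ι → Type w) [∀ i, Fintype (A i)] [∀ i, L.Structure (A i)]
    (B : κ → Type w) [∀ j, Fintype (B j)] [∀ j, L.Structure (B j)]
    (hnrA : ∀ i i' : ι, i ≠ i' → ¬ Nonempty (A i' →[L] A i))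
    (hnrB : ∀ j j' : κ, j ≠ j' → ¬ Nonempty (B j' →[L] B j)) :
    (∀ (γ : Type w) (_ : L.Structure γ),
        (∃ i, Nonempty (A i →[L] γ)) ↔ (∃ j, Nonempty (B j →[L] γ))) ↔
    (∃ e : ι ≃ κ, ∀ i, Nonempty (A i →[L] B (e i)) ∧ Nonempty (B (e i) →[L] A i)) := by
  classical
  constructor
  · intro h
    -- for each i, pick j with B j → A i
    have hf : ∀ i : ι, ∃ j : κ, Nonempty (B j →[L] A i) := by
      intro i
      exact (h (A i) inferInstance).mp ⟨i, ⟨FirstOrder.Language.Hom.id L (A i)⟩⟩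
    have hg : ∀ j : κ, ∃ i : ι, Nonempty (A i →[L] B j) := by
      intro j
      exact (h (B j) inferInstance).mpr ⟨j, ⟨FirstOrder.Language.Hom.id L (B j)⟩⟩
    choose f hf' using hf
    choose g hg' using hg
    have hgf : ∀ i, g (f i) = i := by
      intro i
      by_contra hne
      exact hnrA i (g (f i)) (fun h' => hne h'.symm)
        ⟨((hf' i).some.comp (hg' (f i)).some)⟩
    have hfg : ∀ j, f (g j) = j := by
      intro j
      by_contra hne
      exact hnrB j (f (g j)) (fun h' => hne h'.symm)
        ⟨((hg' j).some.comp (hf' (g j)).some)⟩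
    refine ⟨⟨f, g, hgf, hfg⟩, fun i => ⟨?_, hf' i⟩⟩
    have := hg' (f i)
    rwa [hgf i] at this
  · rintro ⟨e, he⟩ γ instγ
    constructor
    · rintro ⟨i, ⟨φ⟩⟩
      exact ⟨e i, ⟨φ.comp (he i).2.some⟩⟩
    · rintro ⟨j, ⟨φ⟩⟩
      refine ⟨e.symm j, ⟨φ.comp ?_⟩⟩
      have := (he (e.symm j)).1.some
      rwa [e.apply_symm_apply] at this
end

section
/- Let w be a core-minimal width function on structures, extended to UCQs by w(U) = max over constituents. Then for every UCQ U, the semantic width of U (infimum of w(U') over all UCQs U' semantically equivalent to U) equals max{ w(core(A_i)) : A_i ∈ nr(U) }, where nr(U) is a non-redundant UCQ equivalent to U with nr(U) ⊆ U. -/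
open scoped NNReal

/-- Let `w` be a core-minimal width function on structures, extended to UCQs
(finite sets of structures) by taking the maximum over constituents. Then for every UCQ `U`,
the semantic width of `U` — the infimum of `w(U')` over all UCQs `U'` semantically
equivalent to `U` — equals `max { w(core A) : A ∈ nr(U) }`, for any non-redundant
`nr(U) ⊆ U` semantically equivalent to `U`. Structures are axiomatized abstractly: `hom A B`
means a homomorphism `A → B` exists; a UCQ `U` is satisfied by `B` iff some `A ∈ U` has
`hom A B`; `A` is contained in `A'` iff `hom A' A`. -/
theorem stmt_15 {S : Type*} [DecidableEq S]
    (hom : S → S → Prop)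
    (hrefl : ∀ A, hom A A)
    (htrans : ∀ A B C, hom A B → hom B C → hom A C)
    (core : S → S)
    (hcore_to : ∀ A, hom A (core A)) (hcore_from : ∀ A, hom (core A) A)
    (w : S → ℝ≥0)
    (hcore_le : ∀ A, w (core A) ≤ w A)
    -- homomorphically equivalent structures have the same core-width (isomorphism invariance)
    (hcore_inv : ∀ A B, hom A B → hom B A → w (core A) = w (core B))
    (U : Finset S)
    (nrU : Finset S) (hsub : nrU ⊆ U)
    (hnr : ∀ A ∈ nrU, ∀ B ∈ nrU, A ≠ B → ¬ hom B A)
    (hnreq : ∀ B : S, (∃ A ∈ U, hom A B) ↔ (∃ A ∈ nrU, hom A B)) :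
    sInf {r : ℝ≥0 | ∃ U' : Finset S,
        (∀ B : S, (∃ A ∈ U, hom A B) ↔ (∃ A ∈ U', hom A B)) ∧ r = U'.sup w}
      = nrU.sup (fun A => w (core A)) := by
  apply le_antisymm
  · -- sInf ≤ target: witness U' = nrU.image core
    apply csInf_le (OrderBot.bddBelow _)
    refine ⟨nrU.image core, ?_, ?_⟩
    · intro B
      rw [hnreq]
      constructor
      · rintro ⟨A, hA, h⟩
        exact ⟨core A, Finset.mem_image_of_mem _ hA, htrans _ _ _ (hcore_from A) h⟩
      · rintro ⟨A', hA', h⟩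
        obtain ⟨A, hA, rfl⟩ := Finset.mem_image.mp hA'
        exact ⟨A, hA, htrans _ _ _ (hcore_to A) h⟩
    · rw [Finset.sup_image]; rfl
  · -- target ≤ every element of the set
    apply le_csInf
    · exact ⟨nrU.sup (fun A => w (core A)), nrU.image core, by
        intro B
        rw [hnreq]
        constructor
        · rintro ⟨A, hA, h⟩
          exact ⟨core A, Finset.mem_image_of_mem _ hA, htrans _ _ _ (hcore_from A) h⟩
        · rintro ⟨A', hA', h⟩
          obtain ⟨A, hA, rfl⟩ := Finset.mem_image.mp hA'
          exact ⟨A, hA, htrans _ _ _ (hcore_to A) h⟩, by rw [Finset.sup_image]; rfl⟩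
    · rintro r ⟨U', hequiv, rfl⟩
      apply Finset.sup_le
      intro A hA
      -- A ∈ nrU; find A' ∈ U' hom-equivalent to A
      obtain ⟨A', hA', hA'A⟩ := (hequiv A).mp ⟨A, hsub hA, hrefl A⟩
      obtain ⟨A₀, hA₀, hA₀A'⟩ := (hnreq A').mp ((hequiv A').mpr ⟨A', hA', hrefl A'⟩)
      have hA₀A : hom A₀ A := htrans _ _ _ hA₀A' hA'A
      have : A₀ = A := by
        by_contra hne
        exact hnr A hA A₀ hA₀ (fun h => hne h.symm) hA₀A
      subst this
      calc w (core A₀) = w (core A') := hcore_inv _ _ hA₀A' hA'A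
        _ ≤ w A' := hcore_le A'
        _ ≤ U'.sup w := Finset.le_sup hA'
end
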